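/- arXiv:2402.14376 — 3 statements merged into one kernel-verified Lean document; each statement's English description precedes it below -/
import Mathlib

section
/- For finite sets W, X, Y, Z with W ∩ X = ∅ and Y ∩ Z = ∅, it holds that |(W ∪ X) △ (Y ∪ Z)| = |W △ Y| + |X △ Y| + |W △ Z| + |X △ Z| − |W ∪ X| − |Y ∪ Z|. -/
/-!
Write `|A △ B| = |A| + |B| - 2|A ∩ B|` for all five symmetric differences. Since `W, X` and
`Y, Z` are disjoint, `|(W ∪ X) ∩ (Y ∪ Z)|` is the sum of the four pairwise intersections and
`|W| + |X| = |W ∪ X|`, `|Y| + |Z| = |Y ∪ Z|`; the identity is then linear arithmetic.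
-/

open Finset

namespace Finset

variable {α : Type*} [DecidableEq α]

theorem card_symmDiff_add_two_mul_card_inter (s t : Finset α) :
    #(symmDiff s t) + 2 * #(s ∩ t) = #s + #t := by
  rw [symmDiff_eq_sup_sdiff_inf, sup_eq_union, inf_eq_inter,
    card_sdiff_of_subset inter_subset_union, ← card_union_add_card_inter s t]
  have := card_le_card (inter_subset_union (s := s) (t := t))
  omega

theorem card_union_inter_union_of_disjoint {W X Y Z : Finset α}
    (hWX : Disjoint W X) (hYZ : Disjoint Y Z) :
    #((W ∪ X) ∩ (Y ∪ Z)) = #(W ∩ Y) + #(X ∩ Y) + #(W ∩ Z) + #(X ∩ Z) := by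
  have hWX' {A B : Finset α} : Disjoint (W ∩ A) (X ∩ B) :=
    hWX.mono inter_subset_left inter_subset_left
  rw [inter_union_distrib_left,
    card_union_of_disjoint (hYZ.mono inter_subset_right inter_subset_right),
    union_inter_distrib_right, union_inter_distrib_right,
    card_union_of_disjoint hWX', card_union_of_disjoint hWX']
  ring

end Finset

theorem symmDiff_card_union_partition {α : Type*} [DecidableEq α]
    (W X Y Z : Finset α) (hWX : Disjoint W X) (hYZ : Disjoint Y Z) :
    ((symmDiff (W ∪ X) (Y ∪ Z)).card : ℤ) =
      (symmDiff W Y).card + (symmDiff X Y).card + (symmDiff W Z).card +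
        (symmDiff X Z).card - (W ∪ X).card - (Y ∪ Z).card := by
  have := card_symmDiff_add_two_mul_card_inter (W ∪ X) (Y ∪ Z)
  have := card_symmDiff_add_two_mul_card_inter W Y
  have := card_symmDiff_add_two_mul_card_inter X Y
  have := card_symmDiff_add_two_mul_card_inter W Z
  have := card_symmDiff_add_two_mul_card_inter X Z
  have := card_union_inter_union_of_disjoint hWX hYZ
  rw [card_union_of_disjoint hWX, card_union_of_disjoint hYZ] at *
  omega
end

section
/- Let d, k, k' be positive integers with k' < k, and let P_1, …, P_{k'} be finite sets such that |P_i △ P_j| ≥ 3^{k−j}·d for all 1 ≤ i < j ≤ k'. Set q = 3^{k−k'−1}·d. If P and P' are finite sets with |P △ P_i| < q and |P' △ P_j| < q for distinct indices i ≠ j, then |P △ P'| ≥ d. -/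
theorem distance_between_balls_aux {α : Type*} [DecidableEq α] (d k k' : ℕ)
    (hd : 1 ≤ d) (hk' : k' < k) (P : Fin k' → Finset α)
    (hfar : ∀ i j : Fin k', i < j →
      3 ^ (k - (j.val + 1)) * d ≤ (symmDiff (P i) (P j)).card)
    (Q Q' : Finset α) (i j : Fin k') (hij : i < j)
    (hi : (symmDiff Q (P i)).card < 3 ^ (k - k' - 1) * d)
    (hj : (symmDiff Q' (P j)).card < 3 ^ (k - k' - 1) * d) :
    d ≤ (symmDiff Q Q').card := by
  by_contra h
  push_neg at h
  have htri : (symmDiff (P i) (P j)).card ≤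
      (symmDiff (P i) Q).card + ((symmDiff Q Q').card + (symmDiff Q' (P j)).card) := by
    calc (symmDiff (P i) (P j)).card
        ≤ (symmDiff (P i) Q ∪ symmDiff Q (P j)).card :=
          Finset.card_le_card (symmDiff_triangle _ _ _)
      _ ≤ (symmDiff (P i) Q).card + (symmDiff Q (P j)).card := Finset.card_union_le _ _
      _ ≤ (symmDiff (P i) Q).card + ((symmDiff Q Q' ∪ symmDiff Q' (P j)).card) := by
          exact Nat.add_le_add_left (Finset.card_le_card (symmDiff_triangle _ _ _)) _
      _ ≤ _ := Nat.add_le_add_left (Finset.card_union_le _ _) _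
  rw [symmDiff_comm] at hi
  have hfar' := hfar i j hij
  have hq : d ≤ 3 ^ (k - k' - 1) * d :=
    Nat.le_mul_of_pos_left d (Nat.pow_pos (by norm_num))
  have hpow : 3 ^ (k - k') * d ≤ 3 ^ (k - (j.val + 1)) * d := by
    apply Nat.mul_le_mul_right
    apply Nat.pow_le_pow_right (by norm_num)
    omega
  have h3 : 3 * (3 ^ (k - k' - 1) * d) = 3 ^ (k - k') * d := by
    rw [← mul_assoc, ← pow_succ']
    congr 2
    omega
  omega

theorem distance_between_balls {α : Type*} [DecidableEq α] (d k k' : ℕ)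
    (hd : 1 ≤ d) (hk'pos : 1 ≤ k') (hk' : k' < k) (P : Fin k' → Finset α)
    (hfar : ∀ i j : Fin k', i < j →
      3 ^ (k - (j.val + 1)) * d ≤ (symmDiff (P i) (P j)).card)
    (Q Q' : Finset α) (i j : Fin k') (hij : i ≠ j)
    (hi : (symmDiff Q (P i)).card < 3 ^ (k - k' - 1) * d)
    (hj : (symmDiff Q' (P j)).card < 3 ^ (k - k' - 1) * d) :
    d ≤ (symmDiff Q Q').card := by
  rcases lt_or_gt_of_ne hij with hlt | hlt
  · exact distance_between_balls_aux d k k' hd hk' P hfar Q Q' i j hlt hi hj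
  · rw [symmDiff_comm]
    exact distance_between_balls_aux d k k' hd hk' P hfar Q' Q j i hlt hj hi
end

section
/- Let P_0, …, P_{2k−1} be finite sets each of cardinality ℓ such that |P_i △ P_j| ≥ 2ℓ − 2M for all i < j, and each P_i decomposes as a disjoint union P_i = P'_i ∪ P''_i. If Σ_{i<j} |P'_i ∩ P'_j| ≥ k(2k−2)M and Σ_{i<j} |P''_i ∩ P''_j| ≥ kM, then |P_i △ P_j| = 2ℓ − 2M for all i < j. -/
/-!
Since `|P_i △ P_j| + 2 |P_i ∩ P_j| = 2ℓ`, the distance bound says that every pairwise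
intersection has at most `M` elements. The intersections split along the disjoint parts, so the
two counting hypotheses add up to `Σ_{i<j} |P_i ∩ P_j| ≥ k(2k-1) M = binom(2k, 2) M`: the sum of
`binom(2k, 2)` terms, each at most `M`, reaches its maximum, so every term equals `M`.
-/

open Finset

theorem Finset.card_symmDiff_add_two_mul_card_inter_s10 {α : Type*} [DecidableEq α]
    (s t : Finset α) : #(symmDiff s t) + 2 * #(s ∩ t) = #s + #t := by
  rw [symmDiff_eq_sup_sdiff_inf, sup_eq_union, inf_eq_inter,
    card_sdiff_of_subset inter_subset_union, ← card_union_add_card_inter s t]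
  have := card_le_card (inter_subset_union (s := s) (t := t))
  omega

section PairSum

variable {ι β : Type*} [Fintype ι] [LT ι] [DecidableRel (α := ι) (· < ·)]

def pairSum [AddCommMonoid β] (f : ι → ι → β) : β :=
  ∑ i, ∑ j, if i < j then f i j else 0

theorem pairSum_eq_sum_filter [AddCommMonoid β] (f : ι → ι → β) :
    pairSum f = ∑ p ∈ univ.filter (fun p : ι × ι => p.1 < p.2), f p.1 p.2 := by
  rw [pairSum, sum_filter, ← univ_product_univ, sum_product]

theorem pairSum_add [AddCommMonoid β] (f g : ι → ι → β) :
    pairSum (fun i j => f i j + g i j) = pairSum f + pairSum g := by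
  simp only [pairSum_eq_sum_filter, sum_add_distrib]

theorem eq_of_le_of_pairSum_le [AddCommMonoid β] [PartialOrder β] [IsOrderedCancelAddMonoid β]
    {f g : ι → ι → β} (hle : ∀ i j, i < j → f i j ≤ g i j) (hsum : pairSum g ≤ pairSum f)
    {i j : ι} (hij : i < j) : f i j = g i j := by
  rw [pairSum_eq_sum_filter, pairSum_eq_sum_filter] at hsum
  have hmono : ∀ p ∈ univ.filter (fun p : ι × ι => p.1 < p.2), f p.1 p.2 ≤ g p.1 p.2 :=
    fun p hp => hle p.1 p.2 (mem_filter.1 hp).2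
  exact (sum_eq_sum_iff_of_le hmono).1 ((sum_le_sum hmono).antisymm hsum) (i, j) (by simpa)

end PairSum

theorem pairSum_fin_const {β : Type*} [AddCommMonoid β] (n : ℕ) (c : β) :
    pairSum (fun (_ _ : Fin n) => c) = n.choose 2 • c := by
  have hrow : ∀ j : Fin n, (∑ i : Fin n, if i < j then c else 0) = (j : ℕ) • c := by
    intro j
    rw [sum_ite, sum_const_zero, add_zero, sum_const, filter_gt_eq_Iio, Fin.card_Iio]
  rw [pairSum, sum_comm]
  simp only [hrow]
  rw [← sum_smul, Fin.sum_univ_eq_sum_range (fun i => i), sum_range_id, Nat.choose_two_right]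

theorem Nat.choose_two_two_mul (k : ℕ) : (2 * k).choose 2 = k * (2 * k - 2) + k := by
  rw [Nat.choose_two_right, mul_assoc, Nat.mul_div_cancel_left _ two_pos]
  cases k with
  | zero => rfl
  | succ k => rw [show 2 * (k + 1) - 1 = (2 * (k + 1) - 2) + 1 by omega, mul_add_one]

theorem symmDiff_eq_of_counting_general {α : Type*} [DecidableEq α] (k M ℓ : ℕ)
    (P P' P'' : Fin (2 * k) → Finset α)
    (hcard : ∀ i, (P i).card = ℓ)
    (hdisj : ∀ i, Disjoint (P' i) (P'' i))
    (hint : ∀ i j, P i ∩ P j = (P' i ∩ P' j) ∪ (P'' i ∩ P'' j))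
    (hfar : ∀ i j, i < j → 2 * ℓ - 2 * M ≤ (symmDiff (P i) (P j)).card)
    (h1 : k * (2 * k - 2) * M ≤
      ∑ i : Fin (2 * k), ∑ j : Fin (2 * k), if i < j then (P' i ∩ P' j).card else 0)
    (h2 : k * M ≤
      ∑ i : Fin (2 * k), ∑ j : Fin (2 * k), if i < j then (P'' i ∩ P'' j).card else 0) :
    ∀ i j, i < j → (symmDiff (P i) (P j)).card = 2 * ℓ - 2 * M := by
  have hsymm : ∀ i j, #(symmDiff (P i) (P j)) + 2 * #(P i ∩ P j) = 2 * ℓ := fun i j => by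
    rw [card_symmDiff_add_two_mul_card_inter_s10, hcard, hcard, two_mul]
  have hsplit : ∀ i j, #(P i ∩ P j) = #(P' i ∩ P' j) + #(P'' i ∩ P'' j) := fun i j => by
    rw [hint, card_union_of_disjoint ((hdisj i).mono inter_subset_left inter_subset_left)]
  have hle : ∀ i j, i < j → #(P i ∩ P j) ≤ M := fun i j hij => by
    have := hfar i j hij
    have := hsymm i j
    omega
  have hsum : pairSum (fun (_ _ : Fin (2 * k)) => M) ≤ pairSum fun i j => #(P i ∩ P j) := by
    rw [pairSum_fin_const, smul_eq_mul, Nat.choose_two_two_mul, add_mul]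
    simp only [hsplit, pairSum_add]
    exact add_le_add h1 h2
  intro i j hij
  have hinter : #(P i ∩ P j) = M := eq_of_le_of_pairSum_le hle hsum hij
  have := hsymm i j
  omega

theorem symmDiff_eq_of_counting {α : Type*} [DecidableEq α] (k M ℓ : ℕ) (hk : 1 ≤ k)
    (P P' P'' : Fin (2 * k) → Finset α)
    (hcard : ∀ i, (P i).card = ℓ)
    (hdisj : ∀ i, Disjoint (P' i) (P'' i))
    (hunion : ∀ i, P i = P' i ∪ P'' i)
    (hint : ∀ i j, P i ∩ P j = (P' i ∩ P' j) ∪ (P'' i ∩ P'' j))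
    (hfar : ∀ i j, i < j → 2 * ℓ - 2 * M ≤ (symmDiff (P i) (P j)).card)
    (h1 : k * (2 * k - 2) * M ≤
      ∑ i : Fin (2 * k), ∑ j : Fin (2 * k), if i < j then (P' i ∩ P' j).card else 0)
    (h2 : k * M ≤
      ∑ i : Fin (2 * k), ∑ j : Fin (2 * k), if i < j then (P'' i ∩ P'' j).card else 0) :
    ∀ i j, i < j → (symmDiff (P i) (P j)).card = 2 * ℓ - 2 * M :=
  symmDiff_eq_of_counting_general k M ℓ P P' P'' hcard hdisj hint hfar h1 h2
end
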